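/- arXiv:1510.04036 — 2 statements merged into one kernel-verified Lean document; each statement's English description precedes it below -/
import Mathlib

section
/- The Taylor complex of the path ideal I_{k,n} is a minimal free resolution; in particular the i-th total Betti number of I_{k,n} equals binomial(k^n, i+1) for 0 <= i, and the projective dimension of I_{k,n} is k^n - 1 (equivalently, the resolution of I_{k,n} has length k^n). -/
open MvPolynomial

/-- Edges of the complete `k`-ary tree of depth `n`. -/
abbrev TreeEdge (k n : ℕ) := Σ i : Fin n, (Fin (i.1 + 1) → Fin k)

/-- Leaves of the complete `k`-ary tree of depth `n`. -/
abbrev TreeLeaf (k n : ℕ) := Fin n → Fin k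

/-- The edge at depth `i+1` on the root-to-leaf path of the leaf `ℓ`. -/
def pathEdge {k n : ℕ} (ℓ : TreeLeaf k n) (i : Fin n) : TreeEdge k n :=
  ⟨i, fun t => ℓ ⟨t.1, lt_of_lt_of_le t.2 i.2⟩⟩

/-- The squarefree monomial of the unique root-to-leaf path of the leaf `ℓ`. -/
noncomputable def pathMonomial (K : Type) [Field K] {k n : ℕ} (ℓ : TreeLeaf k n) :
    MvPolynomial (TreeEdge k n) K :=
  ∏ i : Fin n, X (pathEdge ℓ i)

/-- The path ideal `I_{k,n}` of the complete `k`-ary tree. -/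
noncomputable def pathIdeal (K : Type) [Field K] (k n : ℕ) :
    Ideal (MvPolynomial (TreeEdge k n) K) :=
  Ideal.span (Set.range (pathMonomial K (k := k) (n := n)))

/-- A minimal graded free resolution of `S/I` with graded Betti numbers `b i j`. -/
structure MinGradedFreeRes (K : Type) [Field K] (σ : Type)
    (I : Ideal (MvPolynomial σ K)) (b : ℕ → ℕ → ℕ) : Type where
  d : ∀ i : ℕ,
    ((Σ j : ℕ, Fin (b (i + 1) j)) →₀ MvPolynomial σ K) →ₗ[MvPolynomial σ K]
    ((Σ j : ℕ, Fin (b i j)) →₀ MvPolynomial σ K)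
  aug : ((Σ j : ℕ, Fin (b 0 j)) →₀ MvPolynomial σ K) →ₗ[MvPolynomial σ K]
    (MvPolynomial σ K ⧸ I)
  aug_surjective : Function.Surjective aug
  exact_zero : LinearMap.ker aug = LinearMap.range (d 0)
  exact : ∀ i, LinearMap.ker (d i) = LinearMap.range (d (i + 1))
  graded : ∀ (i : ℕ) (v : Σ j : ℕ, Fin (b (i + 1) j)) (w : Σ j : ℕ, Fin (b i j)),
    (d i (Finsupp.single v 1)) w ≠ 0 →
      w.1 ≤ v.1 ∧ ((d i (Finsupp.single v 1)) w).IsHomogeneous (v.1 - w.1)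
  graded_aug : ∀ v : Σ j : ℕ, Fin (b 0 j), ∃ g : MvPolynomial σ K,
    g.IsHomogeneous v.1 ∧ aug (Finsupp.single v 1) = Ideal.Quotient.mk I g
  minimal : ∀ (i : ℕ) (v : Σ j : ℕ, Fin (b (i + 1) j)) (w : Σ j : ℕ, Fin (b i j)),
    constantCoeff ((d i (Finsupp.single v 1)) w) = 0
  betti_finite : (Function.support fun p : ℕ × ℕ => b p.1 p.2).Finite

/-!
Two minimal free resolutions of the same module have the same ranks: comparison maps between
them compose to maps homotopic to the identity, and once the differentials vanish after
tensoring with the residue field `K` (here `K` is an algebra over the polynomial ring through the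
constant coefficient), the tensored comparison maps are mutually inverse.

The Taylor complex of the monomials `x^(e ℓ)` is such a resolution of `S ⧸ (x^(e ℓ))`. It is
exact because in each multidegree `α` it is the simplicial chain complex of the full simplex on
the generators dividing `x^α`, which the cone from the least such generator contracts. It is
minimal as soon as distinct sets of generators have distinct lcm's, which holds for paths in a
tree because the last edge of a path lies on no other root-to-leaf path. Its `i`-th module has
rank `binomial (k^n) i`.
-/

open Finsupp LinearMap MvPolynomial

namespace Module.Projective

variable {R : Type} [CommRing R] {P Q M : Type} [AddCommGroup P] [Module R P] [Projective R P]
  [AddCommGroup Q] [Module R Q] [AddCommGroup M] [Module R M]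

theorem exists_comp_eq_of_range_le (f : P →ₗ[R] M) (g : Q →ₗ[R] M) (h : range f ≤ range g) :
    ∃ l : P →ₗ[R] Q, g ∘ₗ l = f := by
  obtain ⟨l, hl⟩ := projective_lifting_property g.rangeRestrict
    (f.codRestrict _ fun x => h (mem_range_self f x)) g.surjective_rangeRestrict
  exact ⟨l, by ext1 x; exact congrArg Subtype.val congr($hl x)⟩

noncomputable def liftOfRangeLe (g : Q →ₗ[R] M) (f : P →ₗ[R] M) (h : range f ≤ range g) :
    P →ₗ[R] Q :=
  (exists_comp_eq_of_range_le f g h).choose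

theorem comp_liftOfRangeLe (g : Q →ₗ[R] M) (f : P →ₗ[R] M) (h : range f ≤ range g) :
    g ∘ₗ liftOfRangeLe g f h = f :=
  (exists_comp_eq_of_range_le f g h).choose_spec

end Module.Projective

open Module.Projective

structure FreeResolution (R : Type) [CommRing R] (M : Type) [AddCommGroup M] [Module R M]
    (ι : ℕ → Type) where
  d : ∀ i, (ι (i + 1) →₀ R) →ₗ[R] (ι i →₀ R)
  aug : (ι 0 →₀ R) →ₗ[R] M
  aug_surjective : Function.Surjective aug
  exact_zero : ker aug = range (d 0)
  exact : ∀ i, ker (d i) = range (d (i + 1))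

namespace FreeResolution

variable {R : Type} [CommRing R] {M N : Type} [AddCommGroup M] [Module R M]
  [AddCommGroup N] [Module R N] {ι κ ν : ℕ → Type}

theorem range_aug (F : FreeResolution R M ι) : range F.aug = ⊤ :=
  range_eq_top.mpr F.aug_surjective

theorem aug_comp_d (F : FreeResolution R M ι) : F.aug ∘ₗ F.d 0 = 0 :=
  range_le_ker_iff.mp F.exact_zero.ge

theorem d_comp_d (F : FreeResolution R M ι) (i : ℕ) : F.d i ∘ₗ F.d (i + 1) = 0 :=
  range_le_ker_iff.mp (F.exact i).ge

variable (F : FreeResolution R M ι) (G : FreeResolution R N κ)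

structure IsLift (f : M →ₗ[R] N) (φ : ∀ i, (ι i →₀ R) →ₗ[R] (κ i →₀ R)) : Prop where
  aug_comp : G.aug ∘ₗ φ 0 = f ∘ₗ F.aug
  d_comp : ∀ i, G.d i ∘ₗ φ (i + 1) = φ i ∘ₗ F.d i

theorem isLift_id : F.IsLift F .id fun _ => .id :=
  ⟨rfl, fun _ => rfl⟩

variable {F G}

theorem IsLift.comp {P : Type} [AddCommGroup P] [Module R P] {H : FreeResolution R P ν}
    {f : M →ₗ[R] N} {g : N →ₗ[R] P} {φ : ∀ i, (ι i →₀ R) →ₗ[R] (κ i →₀ R)}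
    {ψ : ∀ i, (κ i →₀ R) →ₗ[R] (ν i →₀ R)} (hψ : G.IsLift H g ψ) (hφ : F.IsLift G f φ) :
    F.IsLift H (g ∘ₗ f) fun i => ψ i ∘ₗ φ i where
  aug_comp := by rw [← comp_assoc, hψ.aug_comp, comp_assoc, hφ.aug_comp, comp_assoc]
  d_comp i := by rw [← comp_assoc, hψ.d_comp, comp_assoc, hφ.d_comp, comp_assoc]

theorem IsLift.sub {f g : M →ₗ[R] N} {φ ψ : ∀ i, (ι i →₀ R) →ₗ[R] (κ i →₀ R)}
    (hφ : F.IsLift G f φ) (hψ : F.IsLift G g ψ) : F.IsLift G (f - g) fun i => φ i - ψ i where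
  aug_comp := by rw [comp_sub, sub_comp, hφ.aug_comp, hψ.aug_comp]
  d_comp i := by rw [comp_sub, sub_comp, hφ.d_comp, hψ.d_comp]

theorem IsLift.range_le_range_d_zero {φ : ∀ i, (ι i →₀ R) →ₗ[R] (κ i →₀ R)}
    (hφ : F.IsLift G 0 φ) : range (φ 0) ≤ range (G.d 0) := by
  rw [← G.exact_zero, range_le_ker_iff, hφ.aug_comp, zero_comp]

variable (F G)

/-- The maps `(φ i, φ (i + 1))` of a lift of `f`. They are built in pairs because the
construction of `φ (i + 2)` needs the square formed by `φ i` and `φ (i + 1)` to commute. -/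
noncomputable def liftPair (f : M →ₗ[R] N) : ∀ i,
    {p : ((ι i →₀ R) →ₗ[R] (κ i →₀ R)) × ((ι (i + 1) →₀ R) →ₗ[R] (κ (i + 1) →₀ R)) //
      G.d i ∘ₗ p.2 = p.1 ∘ₗ F.d i}
  | 0 =>
    let φ₀ := liftOfRangeLe G.aug (f ∘ₗ F.aug) (le_top.trans_eq G.range_aug.symm)
    have hφ₁ : range (φ₀ ∘ₗ F.d 0) ≤ range (G.d 0) := by
      rw [← G.exact_zero, range_le_ker_iff, ← comp_assoc, comp_liftOfRangeLe, comp_assoc,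
        F.aug_comp_d, comp_zero]
    ⟨(φ₀, liftOfRangeLe (G.d 0) (φ₀ ∘ₗ F.d 0) hφ₁), comp_liftOfRangeLe _ _ hφ₁⟩
  | i + 1 =>
    let p := liftPair f i
    have h : range (p.1.2 ∘ₗ F.d (i + 1)) ≤ range (G.d (i + 1)) := by
      rw [← G.exact i, range_le_ker_iff, ← comp_assoc, p.2, comp_assoc, F.d_comp_d, comp_zero]
    ⟨(p.1.2, liftOfRangeLe (G.d (i + 1)) (p.1.2 ∘ₗ F.d (i + 1)) h), comp_liftOfRangeLe _ _ h⟩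

theorem exists_isLift (f : M →ₗ[R] N) : ∃ φ, F.IsLift G f φ := by
  refine ⟨fun i => (liftPair F G f i).1.1,
    comp_liftOfRangeLe _ _ (le_top.trans_eq G.range_aug.symm), fun i => ?_⟩
  have h : (liftPair F G f (i + 1)).1.1 = (liftPair F G f i).1.2 := by rw [liftPair]
  rw [h, (liftPair F G f i).2]

variable {F G}

noncomputable def IsLift.homotopyPair {φ : ∀ i, (ι i →₀ R) →ₗ[R] (κ i →₀ R)}
    (hφ : F.IsLift G 0 φ) : ∀ i,
    {p : ((ι i →₀ R) →ₗ[R] (κ (i + 1) →₀ R)) × ((ι (i + 1) →₀ R) →ₗ[R] (κ (i + 1 + 1) →₀ R)) //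
      G.d (i + 1) ∘ₗ p.2 = φ (i + 1) - p.1 ∘ₗ F.d i}
  | 0 =>
    let h₀ := liftOfRangeLe (G.d 0) (φ 0) hφ.range_le_range_d_zero
    have hh₁ : range (φ (0 + 1) - h₀ ∘ₗ F.d 0) ≤ range (G.d (0 + 1)) := by
      rw [← G.exact 0, range_le_ker_iff, comp_sub, hφ.d_comp, ← comp_assoc, comp_liftOfRangeLe]
      abel
    ⟨(h₀, liftOfRangeLe (G.d (0 + 1)) (φ (0 + 1) - h₀ ∘ₗ F.d 0) hh₁), comp_liftOfRangeLe _ _ hh₁⟩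
  | i + 1 =>
    let p := hφ.homotopyPair i
    have h : range (φ (i + 1 + 1) - p.1.2 ∘ₗ F.d (i + 1)) ≤ range (G.d (i + 1 + 1)) := by
      rw [← G.exact (i + 1), range_le_ker_iff, comp_sub, hφ.d_comp, ← comp_assoc, p.2, sub_comp,
        comp_assoc, F.d_comp_d, comp_zero]
      abel
    ⟨(p.1.2, liftOfRangeLe (G.d (i + 1 + 1)) (φ (i + 1 + 1) - p.1.2 ∘ₗ F.d (i + 1)) h),
      comp_liftOfRangeLe _ _ h⟩

theorem IsLift.exists_homotopy {φ : ∀ i, (ι i →₀ R) →ₗ[R] (κ i →₀ R)} (hφ : F.IsLift G 0 φ) :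
    ∃ h : ∀ i, (ι i →₀ R) →ₗ[R] (κ (i + 1) →₀ R),
      φ 0 = G.d 0 ∘ₗ h 0 ∧ ∀ i, φ (i + 1) = G.d (i + 1) ∘ₗ h (i + 1) + h i ∘ₗ F.d i := by
  refine ⟨fun i => (hφ.homotopyPair i).1.1,
    (comp_liftOfRangeLe _ _ hφ.range_le_range_d_zero).symm, fun i => ?_⟩
  have h : (hφ.homotopyPair (i + 1)).1.1 = (hφ.homotopyPair i).1.2 := by rw [homotopyPair]
  simp only [h, (hφ.homotopyPair i).2]
  abel

end FreeResolution

section BaseChange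

open TensorProduct

variable {R : Type} [CommRing R] {K : Type} [CommRing K] [Algebra R K]

theorem LinearMap.baseChange_eq_zero_of_algebraMap_apply_eq_zero {α β : Type}
    (f : (α →₀ R) →ₗ[R] (β →₀ R)) (h : ∀ a b, algebraMap R K (f (Finsupp.single a 1) b) = 0) :
    f.baseChange K = 0 := by
  classical
  ext a
  apply (finsuppScalarRight R K K β).injective
  ext b
  simp [Algebra.smul_def, h]

namespace FreeResolution

variable {M : Type} [AddCommGroup M] [Module R M] {ι κ : ℕ → Type}

variable (K) in
/-- For `K = R ⧸ 𝔪` this says that all entries of the differentials lie in `𝔪`. -/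
def IsMinimal (F : FreeResolution R M ι) : Prop := ∀ i, (F.d i).baseChange K = 0

theorem IsMinimal.baseChange_eq_id_of_isLift {F : FreeResolution R M ι} (hF : F.IsMinimal K)
    {χ : ∀ i, (ι i →₀ R) →ₗ[R] (ι i →₀ R)} (hχ : F.IsLift F .id χ) (i : ℕ) :
    (χ i).baseChange K = .id := by
  have hχ₀ : F.IsLift F 0 fun i => χ i - .id := by
    simpa only [sub_self] using hχ.sub (isLift_id F)
  obtain ⟨h, h₀, h_succ⟩ := hχ₀.exists_homotopy
  rw [← sub_eq_zero, ← baseChange_id, ← baseChange_sub]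
  cases i with
  | zero => rw [h₀, baseChange_comp, hF, zero_comp]
  | succ i => rw [h_succ, baseChange_add, baseChange_comp, baseChange_comp, hF, hF, zero_comp,
      comp_zero, add_zero]

theorem IsMinimal.cardinalMk_eq [Nontrivial K] {F : FreeResolution R M ι}
    {G : FreeResolution R M κ} (hF : F.IsMinimal K) (hG : G.IsMinimal K) (i : ℕ) :
    Cardinal.mk (ι i) = Cardinal.mk (κ i) := by
  classical
  obtain ⟨φ, hφ⟩ := F.exists_isLift G .id
  obtain ⟨ψ, hψ⟩ := G.exists_isLift F .id
  let e : K ⊗[R] (ι i →₀ R) ≃ₗ[K] K ⊗[R] (κ i →₀ R) :=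
    .ofLinearMap ((φ i).baseChange K) ((ψ i).baseChange K)
      (by rw [← baseChange_comp]; exact hG.baseChange_eq_id_of_isLift (hφ.comp hψ) i)
      (by rw [← baseChange_comp]; exact hF.baseChange_eq_id_of_isLift (hψ.comp hφ) i)
  simpa using
    ((finsuppScalarRight R K K (ι i)).symm ≪≫ₗ e ≪≫ₗ finsuppScalarRight R K K (κ i)).rank_eq

end FreeResolution

end BaseChange

theorem Finset.sum_sum_erase_eq_zero {α M : Type} [DecidableEq α] [AddCommMonoid M]
    {s : Finset α} {g : α → α → M} (hg : ∀ a ∈ s, ∀ b ∈ s, a ≠ b → g a b + g b a = 0) :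
    ∑ a ∈ s, ∑ b ∈ s.erase a, g a b = 0 := by
  rw [Finset.sum_sigma']
  refine Finset.sum_involution (fun p _ => ⟨p.2, p.1⟩) (fun p hp => ?_) (fun p hp _ => ?_)
    (fun p hp => ?_) (fun p _ => rfl)
  · simp only [Finset.mem_sigma, Finset.mem_erase] at hp
    exact hg _ hp.1 _ hp.2.2 (Ne.symm hp.2.1)
  · simp only [Finset.mem_sigma, Finset.mem_erase] at hp
    intro h
    exact hp.2.1 (congrArg Sigma.fst h)
  · simp only [Finset.mem_sigma, Finset.mem_erase] at hp ⊢
    exact ⟨hp.2.2, Ne.symm hp.2.1, hp.1⟩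

section SubtypeDomain

variable {X M R : Type} [Semiring R] [AddCommMonoid M] [Module R M] {P : Set X}

theorem Finsupp.mapDomain_subtypeVal_eq_extendDomain [DecidablePred (· ∈ P)] (x : P →₀ M) :
    mapDomain Subtype.val x = x.extendDomain := by
  rw [extendDomain_eq_embDomain_subtype, embDomain_eq_mapDomain]
  rfl

theorem Finsupp.mapDomain_subtypeVal_mem_supported (x : P →₀ M) :
    mapDomain Subtype.val x ∈ supported M R P := by
  classical
  rw [mapDomain_subtypeVal_eq_extendDomain, mem_supported]
  exact support_extendDomain_subset x

theorem Finsupp.mapDomain_subtypeVal_subtypeDomain {z : X →₀ M} (hz : z ∈ supported M R P) :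
    mapDomain Subtype.val (subtypeDomain (· ∈ P) z) = z := by
  classical
  rw [mapDomain_subtypeVal_eq_extendDomain]
  exact extendDomain_subtypeDomain z fun a ha => (mem_supported R z).mp hz ha

end SubtypeDomain

section MonomialBasis

variable (K : Type) [CommRing K] (σ X : Type)

noncomputable def finsuppBasisMonomials :
    Module.Basis (Σ _ : X, σ →₀ ℕ) K (X →₀ MvPolynomial σ K) :=
  Finsupp.basis fun _ => basisMonomials σ K

variable {K σ X}

theorem finsuppBasisMonomials_apply (x : X) (a : σ →₀ ℕ) :
    finsuppBasisMonomials K σ X ⟨x, a⟩ = single x (monomial a 1) := by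
  simp [finsuppBasisMonomials, coe_basisMonomials]

theorem supported_le_span_finsuppBasisMonomials (P : Set X) :
    supported (MvPolynomial σ K) K P ≤
      Submodule.span K (finsuppBasisMonomials K σ X '' {p | p.1 ∈ P}) := by
  intro z hz
  rw [Module.Basis.mem_span_image]
  intro p hp
  by_contra hpP
  have hz0 : z p.1 = 0 := notMem_support_iff.mp fun h => hpP ((mem_supported K z).mp hz h)
  simp [finsuppBasisMonomials, Finsupp.basis_repr, hz0] at hp

variable {Y : Type}

theorem map_supported_le_of_single_monomial
    {f : (X →₀ MvPolynomial σ K) →ₗ[K] (Y →₀ MvPolynomial σ K)} {P : Set X} {Q : Set Y}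
    (h : ∀ x ∈ P, ∀ a, f (single x (monomial a 1)) ∈ supported (MvPolynomial σ K) K Q) :
    (supported (MvPolynomial σ K) K P).map f ≤ supported (MvPolynomial σ K) K Q := by
  refine (Submodule.map_mono (supported_le_span_finsuppBasisMonomials P)).trans ?_
  rw [Submodule.map_span_le]
  rintro _ ⟨⟨x, a⟩, hx, rfl⟩
  rw [finsuppBasisMonomials_apply]
  exact h x hx a

theorem eqOn_supported_of_single_monomial
    {f g : (X →₀ MvPolynomial σ K) →ₗ[K] (Y →₀ MvPolynomial σ K)} {P : Set X}
    (h : ∀ x ∈ P, ∀ a, f (single x (monomial a 1)) = g (single x (monomial a 1))) :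
    Set.EqOn f g (supported (MvPolynomial σ K) K P) := by
  refine fun z hz => LinearMap.eqOn_span' ?_ (supported_le_span_finsuppBasisMonomials P hz)
  rintro _ ⟨⟨x, a⟩, hx, rfl⟩
  simpa only [finsuppBasisMonomials_apply] using h x hx a

end MonomialBasis

section Taylor

variable {K : Type} [CommRing K] {σ L : Type} [LinearOrder L]

def taylorSign (ℓ : L) (s : Finset L) : K := (-1) ^ (s.filter (· < ℓ)).card

theorem taylorSign_of_forall_le {ℓ : L} {s : Finset L} (h : ∀ x ∈ s, ℓ ≤ x) :
    (taylorSign ℓ s : K) = 1 := by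
  rw [taylorSign, Finset.filter_false_of_mem fun x hx => not_lt.mpr (h x hx), Finset.card_empty,
    pow_zero]

theorem taylorSign_erase_of_le {ℓ ℓ' : L} {s : Finset L} (h : ℓ ≤ ℓ') :
    (taylorSign ℓ (s.erase ℓ') : K) = taylorSign ℓ s := by
  rw [taylorSign, taylorSign, Finset.filter_erase,
    Finset.erase_eq_of_notMem fun hm => (Finset.mem_filter.mp hm).2.not_ge h]

theorem taylorSign_erase_of_lt {ℓ ℓ' : L} {s : Finset L} (hℓ' : ℓ' ∈ s) (h : ℓ' < ℓ) :
    (taylorSign ℓ (s.erase ℓ') : K) = -taylorSign ℓ s := by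
  have hm : ℓ' ∈ s.filter (· < ℓ) := Finset.mem_filter.mpr ⟨hℓ', h⟩
  rw [taylorSign, taylorSign, Finset.filter_erase, ← Finset.card_erase_add_one hm, pow_succ,
    mul_neg_one, neg_neg]

theorem taylorSign_mul_add_swap {ℓ ℓ' : L} {s : Finset L} (hℓ : ℓ ∈ s) (hℓ' : ℓ' ∈ s)
    (hne : ℓ ≠ ℓ') :
    (taylorSign ℓ s * taylorSign ℓ' (s.erase ℓ) + taylorSign ℓ' s * taylorSign ℓ (s.erase ℓ') :
      K) = 0 := by
  rcases hne.lt_or_gt with h | h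
  · rw [taylorSign_erase_of_lt hℓ h, taylorSign_erase_of_le h.le]; ring
  · rw [taylorSign_erase_of_lt hℓ' h, taylorSign_erase_of_le h.le]; ring

theorem taylorSign_insert_of_lt {ℓ v : L} {s : Finset L} (hv : v ∉ s) (h : v < ℓ) :
    (taylorSign ℓ (insert v s) : K) = -taylorSign ℓ s := by
  rw [← Finset.erase_insert hv, taylorSign_erase_of_lt (Finset.mem_insert_self v s) h, neg_neg,
    Finset.erase_insert hv]

variable (K) (e : L → σ →₀ ℕ)

/-- The Taylor differential of the monomials `x^(e ℓ)`, on the free module with basis `e_s` for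
the finite sets `s` of generators: `e_s ↦ ∑ ℓ ∈ s, ± (m_s / m_(s \ ℓ)) e_(s \ ℓ)`, where
`m_s = x^(s.sup e)` is the lcm of the generators in `s`. -/
noncomputable def taylorDiff :
    (Finset L →₀ MvPolynomial σ K) →ₗ[MvPolynomial σ K] (Finset L →₀ MvPolynomial σ K) :=
  linearCombination _ fun s => ∑ ℓ ∈ s,
    single (s.erase ℓ) (monomial (s.sup e - (s.erase ℓ).sup e) (taylorSign ℓ s))

variable {K}

theorem taylorDiff_single_monomial {s : Finset L} {α : σ →₀ ℕ} (hs : s.sup e ≤ α) (c : K) :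
    taylorDiff K e (single s (monomial (α - s.sup e) c)) =
      ∑ ℓ ∈ s, single (s.erase ℓ) (monomial (α - (s.erase ℓ).sup e) (c * taylorSign ℓ s)) := by
  rw [taylorDiff, linearCombination_single, Finset.smul_sum]
  refine Finset.sum_congr rfl fun ℓ _ => ?_
  rw [smul_single, smul_eq_mul, monomial_mul,
    tsub_add_tsub_cancel hs (Finset.sup_mono (Finset.erase_subset _ _))]

theorem taylorDiff_comp_self : taylorDiff K e ∘ₗ taylorDiff K e = 0 := by
  ext s : 2
  have hs : s.sup e ≤ s.sup e := le_rfl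
  have h1 : (1 : MvPolynomial σ K) = monomial (s.sup e - s.sup e) 1 := by
    rw [tsub_self, monomial_zero', C_1]
  simp only [LinearMap.comp_apply, lsingle_apply, LinearMap.zero_apply]
  rw [h1, taylorDiff_single_monomial e hs, map_sum]
  rw [Finset.sum_congr rfl fun ℓ _ => taylorDiff_single_monomial e
    ((Finset.sup_mono (Finset.erase_subset ℓ s)).trans hs) _]
  refine Finset.sum_sum_erase_eq_zero fun ℓ hℓ ℓ' hℓ' hne => ?_
  rw [Finset.erase_right_comm, ← single_add, ← map_add, one_mul, one_mul,
    taylorSign_mul_add_swap hℓ hℓ' hne, monomial_zero, single_zero]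

variable (K) in
noncomputable def taylorCone (v : L) (α : σ →₀ ℕ) (s : Finset L) : Finset L →₀ MvPolynomial σ K :=
  if v ∈ s then 0 else single (insert v s) (monomial (α - (insert v s).sup e) 1)

theorem taylorDiff_taylorCone_add {v : L} {α : σ →₀ ℕ} {s : Finset L} (hv : e v ≤ α)
    (hs : s.sup e ≤ α) (hmin : ∀ ℓ ∈ s, v ≤ ℓ) :
    taylorDiff K e (taylorCone K e v α s) +
        ∑ ℓ ∈ s, (taylorSign ℓ s : K) • taylorCone K e v α (s.erase ℓ) =
      single s (monomial (α - s.sup e) 1) := by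
  by_cases hvs : v ∈ s
  · rw [taylorCone, if_pos hvs, map_zero, zero_add, Finset.sum_eq_single_of_mem v hvs]
    · rw [taylorCone, if_neg (Finset.notMem_erase v s), Finset.insert_erase hvs,
        taylorSign_of_forall_le hmin, one_smul]
    · intro ℓ _ hne
      rw [taylorCone, if_pos (Finset.mem_erase.mpr ⟨hne.symm, hvs⟩), smul_zero]
  · have hins : (insert v s).sup e ≤ α := by rw [Finset.sup_insert]; exact sup_le hv hs
    have hmin' : ∀ ℓ ∈ insert v s, v ≤ ℓ := by
      simpa only [Finset.mem_insert, forall_eq_or_imp] using ⟨le_rfl, hmin⟩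
    rw [taylorCone, if_neg hvs, taylorDiff_single_monomial e hins, Finset.sum_insert hvs,
      Finset.erase_insert hvs, one_mul, taylorSign_of_forall_le hmin', add_assoc,
      ← Finset.sum_add_distrib, Finset.sum_eq_zero, add_zero]
    intro ℓ hℓ
    have hvℓ : v < ℓ := (hmin ℓ hℓ).lt_of_ne (by rintro rfl; exact hvs hℓ)
    rw [taylorCone, if_neg fun h => hvs (Finset.mem_of_mem_erase h),
      Finset.erase_insert_of_ne hvℓ.ne, one_mul, taylorSign_insert_of_lt hvs hvℓ, smul_single,
      smul_monomial, smul_eq_mul, mul_one, ← single_add, ← map_add, neg_add_cancel,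
      monomial_zero, single_zero]

theorem taylorDiff_mem_supported {i : ℕ} {z : Finset L →₀ MvPolynomial σ K}
    (hz : z ∈ supported (MvPolynomial σ K) K {s : Finset L | s.card = i + 1}) :
    taylorDiff K e z ∈ supported (MvPolynomial σ K) K {s : Finset L | s.card = i} := by
  refine map_supported_le_of_single_monomial (f := (taylorDiff K e).restrictScalars K)
    (fun s hs a => ?_) ⟨z, hz, rfl⟩
  rw [LinearMap.restrictScalars_apply, taylorDiff, linearCombination_single, Finset.smul_sum]
  refine Submodule.sum_mem _ fun ℓ hℓ => ?_
  rw [smul_single]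
  refine single_mem_supported K _ (show (s.erase ℓ).card = i from ?_)
  rw [Finset.card_erase_of_mem hℓ, show s.card = i + 1 from hs, Nat.add_sub_cancel]

theorem taylorCone_mem_supported (v : L) (α : σ →₀ ℕ) (s : Finset L) :
    taylorCone K e v α s ∈ supported (MvPolynomial σ K) K {t : Finset L | t.card = s.card + 1} := by
  unfold taylorCone
  split_ifs with hv
  · exact zero_mem _
  · exact single_mem_supported K _ (Finset.card_insert_of_notMem hv)

variable [Fintype L]

variable (K) in
/-- On `x^a e_s`, of multidegree `α = a + lcm s`, this is the cone from the least generator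
dividing `x^α`: on multidegree `α` the Taylor complex is the simplicial chain complex of the full
simplex on those generators. -/
noncomputable def taylorHomotopy :
    (Finset L →₀ MvPolynomial σ K) →ₗ[K] (Finset L →₀ MvPolynomial σ K) :=
  (finsuppBasisMonomials K σ (Finset L)).constr K fun p =>
    let α := p.2 + p.1.sup e
    if h : {ℓ | e ℓ ≤ α}.toFinset.Nonempty then
      taylorCone K e ({ℓ | e ℓ ≤ α}.toFinset.min' h) α p.1 else 0

theorem taylorHomotopy_single_monomial {s : Finset L} {α : σ →₀ ℕ} {v : L} (hs : s.sup e ≤ α)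
    (hv : e v ≤ α) (hmin : ∀ ℓ, e ℓ ≤ α → v ≤ ℓ) (c : K) :
    taylorHomotopy K e (single s (monomial (α - s.sup e) c)) = c • taylorCone K e v α s := by
  have hsingle : single s (monomial (α - s.sup e) c) =
      c • finsuppBasisMonomials K σ (Finset L) ⟨s, α - s.sup e⟩ := by
    rw [finsuppBasisMonomials_apply, smul_single, smul_monomial, smul_eq_mul, mul_one]
  have hF : {ℓ | e ℓ ≤ α}.toFinset.Nonempty := ⟨v, by simpa using hv⟩
  have hvF : {ℓ | e ℓ ≤ α}.toFinset.min' hF = v :=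
    le_antisymm (Finset.min'_le _ v (by simpa using hv))
      (hmin _ (by simpa using Finset.min'_mem _ hF))
  rw [hsingle, map_smul, taylorHomotopy, Module.Basis.constr_basis]
  simp only [tsub_add_cancel_of_le hs, dif_pos hF, hvF]

theorem taylorDiff_taylorHomotopy_add {s : Finset L} (hs : s.Nonempty) (a : σ →₀ ℕ) :
    taylorDiff K e (taylorHomotopy K e (single s (monomial a 1))) +
        taylorHomotopy K e (taylorDiff K e (single s (monomial a 1))) =
      single s (monomial a 1) := by
  obtain ⟨α, hsα, rfl⟩ : ∃ α, s.sup e ≤ α ∧ a = α - s.sup e :=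
    ⟨a + s.sup e, le_add_self, (add_tsub_cancel_right a _).symm⟩
  obtain ⟨ℓ₀, hℓ₀⟩ := hs
  have hF : {ℓ | e ℓ ≤ α}.toFinset.Nonempty :=
    ⟨ℓ₀, by simpa using (Finset.le_sup hℓ₀).trans hsα⟩
  obtain ⟨v, hv, hmin⟩ : ∃ v, e v ≤ α ∧ ∀ ℓ, e ℓ ≤ α → v ≤ ℓ :=
    ⟨{ℓ | e ℓ ≤ α}.toFinset.min' hF, by simpa using Finset.min'_mem _ hF,
      fun ℓ h => Finset.min'_le {ℓ | e ℓ ≤ α}.toFinset ℓ (by simpa using h)⟩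
  rw [taylorHomotopy_single_monomial e hsα hv hmin, one_smul, taylorDiff_single_monomial e hsα,
    map_sum, Finset.sum_congr rfl fun ℓ _ => taylorHomotopy_single_monomial e
      ((Finset.sup_mono (Finset.erase_subset ℓ s)).trans hsα) hv hmin _]
  simp only [one_mul]
  exact taylorDiff_taylorCone_add e hv hsα fun ℓ hℓ => hmin ℓ ((Finset.le_sup hℓ).trans hsα)

theorem taylorHomotopy_mem_supported {i : ℕ} {z : Finset L →₀ MvPolynomial σ K}
    (hz : z ∈ supported (MvPolynomial σ K) K {s : Finset L | s.card = i}) :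
    taylorHomotopy K e z ∈ supported (MvPolynomial σ K) K {s : Finset L | s.card = i + 1} := by
  refine map_supported_le_of_single_monomial (fun s hs a => ?_) ⟨z, hz, rfl⟩
  rw [← finsuppBasisMonomials_apply, taylorHomotopy, Module.Basis.constr_basis]
  dsimp only
  split_ifs
  · exact (show s.card = i from hs) ▸ taylorCone_mem_supported e _ _ s
  · exact zero_mem _

theorem taylorDiff_taylorHomotopy_add_of_mem {z : Finset L →₀ MvPolynomial σ K}
    (hz : z ∈ supported (MvPolynomial σ K) K {s : Finset L | s.Nonempty}) :
    taylorDiff K e (taylorHomotopy K e z) + taylorHomotopy K e (taylorDiff K e z) = z :=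
  eqOn_supported_of_single_monomial
    (f := (taylorDiff K e).restrictScalars K ∘ₗ taylorHomotopy K e +
      taylorHomotopy K e ∘ₗ (taylorDiff K e).restrictScalars K) (g := .id)
    (fun _ hs a => taylorDiff_taylorHomotopy_add e hs a) hz

end Taylor

section TaylorAug

variable {K : Type} [CommRing K] {σ L : Type} (e : L → σ →₀ ℕ)

theorem Finsupp.eq_single_empty {M : Type} [Zero M] (x : ↥{s : Finset L | s.card = 0} →₀ M) :
    x = single ⟨∅, Finset.card_empty⟩ (x ⟨∅, Finset.card_empty⟩) := by
  ext ⟨u, hu⟩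
  obtain rfl := Finset.card_eq_zero.mp hu
  rw [single_eq_same]

variable (K) in
noncomputable def taylorAug :
    (↥{s : Finset L | s.card = 0} →₀ MvPolynomial σ K) →ₗ[MvPolynomial σ K]
      MvPolynomial σ K ⧸ Ideal.span (Set.range fun ℓ => monomial (e ℓ) (1 : K)) :=
  (Ideal.span (Set.range fun ℓ => monomial (e ℓ) (1 : K))).mkQ ∘ₗ lapply ⟨∅, Finset.card_empty⟩

theorem taylorAug_surjective : Function.Surjective (taylorAug K e) := by
  intro q
  obtain ⟨f, rfl⟩ := Submodule.mkQ_surjective _ q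
  exact ⟨single _ f, by rw [taylorAug, LinearMap.comp_apply, lapply_apply, single_eq_same]⟩

end TaylorAug

section TaylorResolution

variable {K : Type} [CommRing K] {σ L : Type} [LinearOrder L] (e : L → σ →₀ ℕ)

variable (K) in
noncomputable def taylorLevelDiff (i : ℕ) :
    (↥{s : Finset L | s.card = i + 1} →₀ MvPolynomial σ K) →ₗ[MvPolynomial σ K]
      (↥{s : Finset L | s.card = i} →₀ MvPolynomial σ K) :=
  lsubtypeDomain _ ∘ₗ taylorDiff K e ∘ₗ lmapDomain _ _ Subtype.val

theorem mapDomain_taylorLevelDiff (i : ℕ)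
    (x : ↥{s : Finset L | s.card = i + 1} →₀ MvPolynomial σ K) :
    mapDomain Subtype.val (taylorLevelDiff K e i x) = taylorDiff K e (mapDomain Subtype.val x) := by
  rw [taylorLevelDiff, comp_apply, comp_apply, lsubtypeDomain_apply, lmapDomain_apply,
    mapDomain_subtypeVal_subtypeDomain
      (taylorDiff_mem_supported e (mapDomain_subtypeVal_mem_supported (R := K) x))]

theorem taylorLevelDiff_zero_single (ℓ : L) (f : MvPolynomial σ K) :
    taylorLevelDiff K e 0 (single ⟨{ℓ}, Finset.card_singleton ℓ⟩ f) =
      single ⟨∅, Finset.card_empty⟩ (f * monomial (e ℓ) 1) := by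
  refine mapDomain_injective Subtype.val_injective ?_
  rw [mapDomain_taylorLevelDiff, mapDomain_single, mapDomain_single, taylorDiff,
    linearCombination_single, Finset.sum_singleton, Finset.erase_singleton, Finset.sup_singleton,
    Finset.sup_empty, bot_eq_zero, tsub_zero,
    taylorSign_of_forall_le fun x hx => (Finset.mem_singleton.mp hx).ge, smul_single, smul_eq_mul]

theorem constantCoeff_taylorDiff_single_one_apply
    (he : Function.Injective fun s : Finset L => s.sup e) (s t : Finset L) : constantCoeff (taylorDiff K e (single s 1) t) = 0 := by
  classical
  rw [taylorDiff, linearCombination_single, one_smul, Finset.sum_apply', map_sum]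
  refine Finset.sum_eq_zero fun ℓ hℓ => ?_
  rw [Finsupp.single_apply]
  split_ifs
  · rw [constantCoeff_monomial, if_neg]
    intro h
    have := le_antisymm (Finset.sup_mono (Finset.erase_subset ℓ s)) (tsub_eq_zero_iff_le.mp h)
    exact (Finset.erase_ssubset hℓ).ne (he this)
  · exact map_zero _

theorem constantCoeff_taylorLevelDiff_single_one_apply
    (he : Function.Injective fun s : Finset L => s.sup e) (i : ℕ)
    (p : ↥{s : Finset L | s.card = i + 1}) (w : ↥{s : Finset L | s.card = i}) :
    constantCoeff (taylorLevelDiff K e i (single p 1) w) = 0 := by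
  rw [← mapDomain_apply Subtype.val_injective, mapDomain_taylorLevelDiff, mapDomain_single]
  exact constantCoeff_taylorDiff_single_one_apply e he _ _

variable [Fintype L]

theorem ker_taylorAug : ker (taylorAug K e) = range (taylorLevelDiff K e 0) := by
  apply le_antisymm
  · intro x hx
    rw [mem_ker, taylorAug, comp_apply, lapply_apply, Submodule.mkQ_apply,
      Submodule.Quotient.mk_eq_zero, Ideal.mem_span_range_iff_exists_fun] at hx
    obtain ⟨c, hc⟩ := hx
    refine ⟨∑ ℓ, single ⟨{ℓ}, Finset.card_singleton ℓ⟩ (c ℓ), ?_⟩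
    rw [map_sum, Finset.sum_congr rfl fun ℓ _ => taylorLevelDiff_zero_single e ℓ (c ℓ),
      ← single_finsetSum, hc, ← eq_single_empty]
  · rintro _ ⟨y, rfl⟩
    have : taylorAug K e ∘ₗ taylorLevelDiff K e 0 = 0 := by
      ext ⟨p, hp⟩ : 2
      obtain ⟨ℓ, rfl⟩ := Finset.card_eq_one.mp hp
      simp only [comp_apply, lsingle_apply, zero_comp, LinearMap.zero_apply]
      rw [taylorLevelDiff_zero_single, taylorAug, comp_apply, lapply_apply, single_eq_same,
        one_mul, Submodule.mkQ_apply, Submodule.Quotient.mk_eq_zero]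
      exact Ideal.subset_span ⟨ℓ, rfl⟩
    exact congr($this y)

theorem ker_taylorLevelDiff (i : ℕ) :
    ker (taylorLevelDiff K e i) = range (taylorLevelDiff K e (i + 1)) := by
  apply le_antisymm
  · intro x hx
    have hz := mapDomain_subtypeVal_mem_supported (R := K) x
    have hDz : taylorDiff K e (mapDomain Subtype.val x) = 0 := by
      rw [← mapDomain_taylorLevelDiff, mem_ker.mp hx, mapDomain_zero]
    refine ⟨subtypeDomain (· ∈ {s : Finset L | s.card = i + 1 + 1})
      (taylorHomotopy K e (mapDomain Subtype.val x)), mapDomain_injective Subtype.val_injective ?_⟩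
    have hsub : {s : Finset L | s.card = i + 1} ⊆ {s | s.Nonempty} := fun s hs =>
      Finset.card_pos.mp (by rw [show s.card = i + 1 from hs]; omega)
    have hnonempty := taylorDiff_taylorHomotopy_add_of_mem e (supported_mono hsub hz)
    rwa [hDz, map_zero, add_zero, ← mapDomain_subtypeVal_subtypeDomain
      (taylorHomotopy_mem_supported e hz), ← mapDomain_taylorLevelDiff] at hnonempty
  · rintro _ ⟨y, rfl⟩
    refine mapDomain_injective Subtype.val_injective ?_
    rw [mapDomain_taylorLevelDiff, mapDomain_taylorLevelDiff, mapDomain_zero]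
    exact congr($(taylorDiff_comp_self e) _)

variable (K) in
noncomputable def taylorResolution :
    FreeResolution (MvPolynomial σ K)
      (MvPolynomial σ K ⧸ Ideal.span (Set.range fun ℓ => monomial (e ℓ) (1 : K)))
      fun i => ↥{s : Finset L | s.card = i} where
  d := taylorLevelDiff K e
  aug := taylorAug K e
  aug_surjective := taylorAug_surjective e
  exact_zero := ker_taylorAug e
  exact := ker_taylorLevelDiff e

end TaylorResolution

section PathIdeal

variable {k n : ℕ}

theorem Finset.sup_injective_of_apply_ne_zero_iff {σ L : Type} {e : L → σ →₀ ℕ} (x : L → σ)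
    (hx : ∀ ℓ ℓ', e ℓ' (x ℓ) ≠ 0 ↔ ℓ' = ℓ) : Function.Injective fun s : Finset L => s.sup e := by
  have hmem : ∀ (s : Finset L) ℓ, ℓ ∈ s ↔ (s.sup e) (x ℓ) ≠ 0 := fun s ℓ => by
    rw [Finset.apply_sup_eq_sup_comp (fun p : σ →₀ ℕ => p (x ℓ)) (fun _ _ => rfl) rfl, ne_eq,
      ← bot_eq_zero, Finset.sup_eq_bot_iff]
    simp [hx]
  exact fun s t h => Finset.ext fun ℓ => by simp only [hmem, h]

noncomputable def pathExponent (ℓ : TreeLeaf k n) : TreeEdge k n →₀ ℕ :=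
  ∑ i, single (pathEdge ℓ i) 1

theorem pathMonomial_eq_monomial (K : Type) [Field K] (ℓ : TreeLeaf k n) :
    pathMonomial K ℓ = monomial (pathExponent ℓ) 1 := by
  rw [pathMonomial, pathExponent, monomial_sum_one]
  rfl

theorem pathIdeal_eq_span_monomial (K : Type) [Field K] :
    pathIdeal K k n = Ideal.span (Set.range fun ℓ => monomial (pathExponent ℓ) (1 : K)) := by
  rw [pathIdeal]
  congr 2
  exact funext (pathMonomial_eq_monomial K)

theorem eq_of_pathEdge_eq_pathEdge_last (hn : 1 ≤ n) {ℓ ℓ' : TreeLeaf k n} {i : Fin n}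
    (h : pathEdge ℓ' i = pathEdge ℓ ⟨n - 1, by omega⟩) : ℓ' = ℓ := by
  obtain ⟨h1, h2⟩ := Sigma.mk.inj_iff.mp h
  rw [h1] at h2
  funext j
  simpa using congrFun (eq_of_heq h2) ⟨j, show j.1 < n - 1 + 1 by omega⟩

theorem pathExponent_apply_last_ne_zero_iff (hn : 1 ≤ n) (ℓ ℓ' : TreeLeaf k n) :
    pathExponent ℓ' (pathEdge ℓ ⟨n - 1, by omega⟩) ≠ 0 ↔ ℓ' = ℓ := by
  classical
  simp only [pathExponent, Finsupp.finsetSum_apply, Finsupp.single_apply, ne_eq,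
    Finset.sum_eq_zero_iff, Finset.mem_univ, true_implies, not_forall, ite_eq_right_iff,
    one_ne_zero, imp_false, not_not]
  exact ⟨fun ⟨_, hi⟩ => eq_of_pathEdge_eq_pathEdge_last hn hi, by rintro rfl; exact ⟨_, rfl⟩⟩

theorem pathExponent_sup_injective (hn : 1 ≤ n) :
    Function.Injective fun s : Finset (TreeLeaf k n) => s.sup pathExponent :=
  Finset.sup_injective_of_apply_ne_zero_iff _ (pathExponent_apply_last_ne_zero_iff hn)

end PathIdeal

theorem finsum_eq_natCard_sigma {b : ℕ → ℕ} (hb : (Function.support b).Finite) :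
    ∑ᶠ j, b j = Nat.card (Σ j, Fin (b j)) := by
  rw [← Nat.card_congr (Equiv.sigmaSubtypeEquivOfSubset (fun j => Fin (b j)) (· ∈ hb.toFinset)
    fun j x => hb.mem_toFinset.mpr x.pos.ne'), Nat.card_sigma, finsum_eq_sum b hb]
  simp only [Nat.card_eq_fintype_card, Fintype.card_fin]
  exact (Finset.sum_coe_sort hb.toFinset b).symm

theorem natCard_setOf_card_eq (L : Type) [Fintype L] (i : ℕ) :
    Nat.card {s : Finset L | s.card = i} = (Fintype.card L).choose i := by
  rw [Nat.card_eq_fintype_card]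
  simp

namespace MinGradedFreeRes

variable {K : Type} [Field K] {σ : Type} {I : Ideal (MvPolynomial σ K)} {b : ℕ → ℕ → ℕ}

def toFreeResolution (F : MinGradedFreeRes K σ I b) :
    FreeResolution (MvPolynomial σ K) (MvPolynomial σ K ⧸ I) fun i => Σ j, Fin (b i j) :=
  ⟨F.d, F.aug, F.aug_surjective, F.exact_zero, F.exact⟩

theorem support_finite (F : MinGradedFreeRes K σ I b) (i : ℕ) : (Function.support (b i)).Finite :=
  F.betti_finite.preimage (Prod.mk_right_injective i).injOn

end MinGradedFreeRes

theorem pathIdeal_taylor_minimal_general (K : Type) [Field K] (k n : ℕ)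
    (hn : 1 ≤ n) (b : ℕ → ℕ → ℕ)
    (hb : MinGradedFreeRes K (TreeEdge k n) (pathIdeal K k n) b) :
    (∀ i : ℕ, 1 ≤ i → ∑ᶠ j : ℕ, b i j = Nat.choose (k ^ n) i) ∧
    (∀ i : ℕ, k ^ n < i → ∀ j : ℕ, b i j = 0) ∧
    (∃ j : ℕ, b (k ^ n) j ≠ 0) := by
  -- any linear order on the leaves will do: it only fixes the signs of the Taylor differential
  let : LinearOrder (TreeLeaf k n) :=
    LinearOrder.lift' (Fintype.equivFin _) (Fintype.equivFin _).injective
  let : Algebra (MvPolynomial (TreeEdge k n) K) K := constantCoeff.toAlgebra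
  rw [pathIdeal_eq_span_monomial] at hb
  have hb_min : hb.toFreeResolution.IsMinimal K := fun i =>
    (hb.d i).baseChange_eq_zero_of_algebraMap_apply_eq_zero (hb.minimal i)
  have htaylor_min : (taylorResolution K (pathExponent (k := k) (n := n))).IsMinimal K := fun i =>
    ((taylorResolution K pathExponent).d i).baseChange_eq_zero_of_algebraMap_apply_eq_zero
      (constantCoeff_taylorLevelDiff_single_one_apply _ (pathExponent_sup_injective hn) i)
  have hbetti (i : ℕ) : ∑ᶠ j, b i j = (k ^ n).choose i := by
    rw [finsum_eq_natCard_sigma (hb.support_finite i), Nat.card, hb_min.cardinalMk_eq htaylor_min,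
      ← Nat.card, natCard_setOf_card_eq, Fintype.card_fun, Fintype.card_fin, Fintype.card_fin]
  refine ⟨fun i _ => hbetti i, fun i hi j => ?_, ?_⟩
  · have := single_le_finsum j (hb.support_finite i) fun j => Nat.zero_le (b i j)
    rw [hbetti, Nat.choose_eq_zero_of_lt hi] at this
    omega
  · by_contra! h
    have := hbetti (k ^ n)
    rw [finsum_eq_zero_of_forall_eq_zero h, Nat.choose_self] at this
    omega

/-- The Taylor complex of the path ideal `I_{k,n}` is a minimal free resolution:
for every minimal graded free resolution of `S/I_{k,n}`, the `i`-th total Betti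
number of `S/I_{k,n}` is `binomial (k^n) i` for `i ≥ 1` (equivalently, the `i`-th
total Betti number of the ideal `I_{k,n}` is `binomial (k^n) (i+1)`), the Betti
numbers vanish in homological degrees above `k^n`, and do not vanish in degree
`k^n`; i.e. the projective dimension of `I_{k,n}` is `k^n - 1` (the resolution of
`I_{k,n}` has length `k^n`). -/
theorem pathIdeal_taylor_minimal (K : Type) [Field K] (k n : ℕ) (hk : 1 ≤ k)
    (hn : 1 ≤ n) (b : ℕ → ℕ → ℕ)
    (hb : MinGradedFreeRes K (TreeEdge k n) (pathIdeal K k n) b) :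
    (∀ i : ℕ, 1 ≤ i → ∑ᶠ j : ℕ, b i j = Nat.choose (k ^ n) i) ∧
    (∀ i : ℕ, k ^ n < i → ∀ j : ℕ, b i j = 0) ∧
    (∃ j : ℕ, b (k ^ n) j ≠ 0) :=
  pathIdeal_taylor_minimal_general K k n hn b hb
end

section
/- The path ideal of a graph G (with source q and target set L) equals the intersection, over all minimal cuts C separating q from all of L, of the monomial prime ideals generated by the variables of the edges in C; in particular the path ideal is the Alexander dual of the cut ideal. -/
open MvPolynomial

open scoped Classical in
/-- The squarefree monomial of a walk `w` in the polynomial ring with one variable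
for each edge of `G`. -/
noncomputable def walkMonomial (K : Type) [Field K] {V : Type} [DecidableEq V]
    {G : SimpleGraph V} {a c : V} (w : G.Walk a c) :
    MvPolynomial G.edgeSet K :=
  ∏ e ∈ w.edges.toFinset,
    if h : e ∈ G.edgeSet then X (⟨e, h⟩ : G.edgeSet) else 1

/-- The path ideal of `G` with source `q` and target set `L`: it is generated by
the monomials of the paths connecting `q` to some vertex of `L`. -/
noncomputable def graphPathIdeal (K : Type) [Field K] {V : Type} [DecidableEq V]
    (G : SimpleGraph V) (q : V) (L : Set V) : Ideal (MvPolynomial G.edgeSet K) :=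
  Ideal.span { m | ∃ l : V, l ∈ L ∧ ∃ w : G.Walk q l, w.IsPath ∧ m = walkMonomial K w }

/-- The set of edges of `G` with one endpoint in `A` and the other outside `A`. -/
def cutEdges {V : Type} (G : SimpleGraph V) (A : Set V) : Set G.edgeSet :=
  { e | ∃ u v : V, (e : Sym2 V) = s(u, v) ∧ u ∈ A ∧ v ∉ A }

/-- `C` is a cut separating `q` from `L`: `C = E(A, Aᶜ)` for some vertex set `A`
containing `L` with `q ∉ A`. -/
def IsCut {V : Type} (G : SimpleGraph V) (q : V) (L : Set V) (C : Set G.edgeSet) : Prop :=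
  ∃ A : Set V, L ⊆ A ∧ q ∉ A ∧ C = cutEdges G A

/-- `C` is a minimal cut separating `q` from `L`. -/
def IsMinimalCut {V : Type} (G : SimpleGraph V) (q : V) (L : Set V)
    (C : Set G.edgeSet) : Prop :=
  IsCut G q L C ∧ ∀ C' : Set G.edgeSet, IsCut G q L C' → C' ⊆ C → C' = C

/-!
Both sides are squarefree monomial ideals, so membership can be tested one monomial at a time:
a monomial with support `F` lies in the path ideal iff `F` contains the edges of a path from `q`
into `L`, and in the intersection iff `F` meets every minimal cut. A path from `q ∉ A` to a vertex
of `L ⊆ A` must cross `E(A, Aᶜ)`. Conversely, if `F` meets every minimal cut then it meets every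
cut, since `G` is finite. Let `A` be the set of vertices not reachable from `q` along edges of `F`:
no edge of `F` joins `A` to `Aᶜ`, so `E(A, Aᶜ)` is not a cut, and as `q ∉ A` this means that some
vertex of `L` is reachable from `q` along `F`.
-/

open SimpleGraph

section Combinatorics

variable {V : Type} {G : SimpleGraph V} {q : V} {L : Set V}

open Classical in
noncomputable def walkEdgeFinset {a c : V} (w : G.Walk a c) : Finset G.edgeSet :=
  w.edges.toFinset.subtype (· ∈ G.edgeSet)

@[simp]
lemma mem_walkEdgeFinset {a c : V} (w : G.Walk a c) (e : G.edgeSet) :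
    e ∈ walkEdgeFinset w ↔ (e : Sym2 V) ∈ w.edges := by
  simp [walkEdgeFinset]

lemma exists_mem_walkEdgeFinset_cutEdges {A : Set V} {a c : V} (w : G.Walk a c)
    (ha : a ∉ A) (hc : c ∈ A) : ∃ e ∈ walkEdgeFinset w, e ∈ cutEdges G A := by
  obtain ⟨d, hd, hdA, hdA'⟩ := w.exists_boundary_dart Aᶜ ha (by simpa using hc)
  refine ⟨⟨d.edge, d.edge_mem⟩, ?_, d.snd, d.fst, Sym2.eq_swap, not_not.mp hdA', hdA⟩
  rw [mem_walkEdgeFinset, Walk.edges_eq_map_darts]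
  exact List.mem_map_of_mem hd

lemma IsCut.exists_isMinimalCut_subset [Finite V] {C : Set G.edgeSet} (hC : IsCut G q L C) :
    ∃ C₀ ⊆ C, IsMinimalCut G q L C₀ := by
  obtain ⟨C₀, hsub, hC₀, hmin⟩ := exists_minimal_le_of_wellFoundedLT (IsCut G q L) C hC
  exact ⟨C₀, hsub, hC₀, fun C' hC' hle => hle.antisymm (hmin hC' hle)⟩

lemma cutEdges_not_reachable_inter_eq_empty (F : Set G.edgeSet) :
    cutEdges G {v | ¬ (fromEdgeSet (Subtype.val '' F)).Reachable q v} ∩ F = ∅ := by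
  refine Set.eq_empty_of_forall_notMem fun e ⟨⟨u, v, huv, hu, hv⟩, heF⟩ => hu ?_
  have hGuv : G.Adj u v := by
    rw [← mem_edgeSet, ← huv]
    exact e.2
  have hFvu : (fromEdgeSet (Subtype.val '' F)).Adj v u := by
    rw [fromEdgeSet_adj, Sym2.eq_swap, ← huv]
    exact ⟨⟨e, heF, rfl⟩, hGuv.ne.symm⟩
  exact (not_not.mp hv).trans hFvu.reachable

lemma exists_isPath_of_forall_isCut_inter_nonempty (F : Set G.edgeSet)
    (hF : ∀ C, IsCut G q L C → (C ∩ F).Nonempty) :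
    ∃ l ∈ L, ∃ w : G.Walk q l, w.IsPath ∧ ↑(walkEdgeFinset w) ⊆ F := by
  classical
  set H := fromEdgeSet (Subtype.val '' F)
  have hHF : H.edgeSet ⊆ Subtype.val '' F := by
    rw [edgeSet_fromEdgeSet]
    exact Set.sdiff_subset
  have hHG : H ≤ G :=
    edgeSet_subset_edgeSet.mp (hHF.trans (by rintro _ ⟨e, -, rfl⟩; exact e.2))
  obtain ⟨l, hl, ⟨p⟩⟩ : ∃ l ∈ L, H.Reachable q l := by
    by_contra! hunreachable
    have hcut : IsCut G q L (cutEdges G {v | ¬ H.Reachable q v}) :=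
      ⟨_, hunreachable, fun h => h (Reachable.refl q), rfl⟩
    simpa [H, cutEdges_not_reachable_inter_eq_empty] using hF _ hcut
  refine ⟨l, hl, p.toPath.1.mapLe hHG, p.toPath.2.mapLe hHG, fun e he => ?_⟩
  rw [Finset.mem_coe, mem_walkEdgeFinset, Walk.edges_mapLe_eq_edges] at he
  obtain ⟨e', he'F, he'⟩ := hHF (p.toPath.1.edges_subset_edgeSet he)
  rwa [← Subtype.ext he']

theorem exists_isPath_subset_iff_forall_isMinimalCut [Finite V] (F : Set G.edgeSet) :
    (∃ l ∈ L, ∃ w : G.Walk q l, w.IsPath ∧ ↑(walkEdgeFinset w) ⊆ F) ↔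
      ∀ C, IsMinimalCut G q L C → (C ∩ F).Nonempty := by
  constructor
  · rintro ⟨l, hl, w, -, hwF⟩ C ⟨⟨A, hLA, hqA, rfl⟩, -⟩
    obtain ⟨e, hew, heA⟩ := exists_mem_walkEdgeFinset_cutEdges w hqA (hLA hl)
    exact ⟨e, heA, hwF hew⟩
  · refine fun h => exists_isPath_of_forall_isCut_inter_nonempty F fun C hC => ?_
    obtain ⟨C₀, hsub, hC₀⟩ := hC.exists_isMinimalCut_subset
    exact (h C₀ hC₀).mono (Set.inter_subset_inter_left F hsub)

end Combinatorics

section Algebra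

variable {R σ : Type*} [CommSemiring R]

lemma Finsupp.sum_single_one_le_iff_subset_support (s : Finset σ) (m : σ →₀ ℕ) :
    ∑ e ∈ s, Finsupp.single e 1 ≤ m ↔ s ⊆ m.support := by
  classical
  simp only [Finsupp.le_def, Finsupp.finsetSum_apply, Finsupp.single_apply, Finset.sum_ite_eq',
    Finset.subset_iff, Finsupp.mem_support_iff, ← Nat.one_le_iff_ne_zero]
  exact ⟨fun h e he => by simpa [he] using h e, fun h e => by split_ifs with he <;> simp [h, he]⟩

lemma MvPolynomial.prod_X_eq_monomial_sum_single (s : Finset σ) :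
    ∏ e ∈ s, (X e : MvPolynomial σ R) = monomial (∑ e ∈ s, Finsupp.single e 1) 1 :=
  (monomial_sum_one s _).symm

lemma MvPolynomial.mem_iInf_span_X_image_iff (P : Set σ → Prop) (f : MvPolynomial σ R) :
    f ∈ ⨅ (C : Set σ) (_ : P C), Ideal.span ((X : σ → MvPolynomial σ R) '' C) ↔
      ∀ m ∈ f.support, ∀ C, P C → (C ∩ ↑m.support).Nonempty := by
  simp only [Submodule.mem_iInf, mem_ideal_span_X_image, Set.Nonempty, Set.mem_inter_iff,
    Finset.mem_coe, Finsupp.mem_support_iff]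
  exact ⟨fun h m hm C hC => h C hC m hm, fun h C hC m hm => h m hm C hC⟩

variable {K : Type} [Field K] {V : Type} [DecidableEq V] {G : SimpleGraph V}

lemma walkMonomial_eq_prod_X {a c : V} (w : G.Walk a c) :
    walkMonomial K w = ∏ e ∈ walkEdgeFinset w, X e := by
  classical
  have hfilter : w.edges.toFinset.filter (· ∈ G.edgeSet) = w.edges.toFinset :=
    Finset.filter_true_of_mem fun e he => w.edges_subset_edgeSet (List.mem_toFinset.mp he)
  rw [walkMonomial, walkEdgeFinset, ← hfilter, ← Finset.prod_subtype_eq_prod_filter]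
  exact Finset.prod_congr (by ext; simp) fun e _ => dif_pos e.2

lemma mem_graphPathIdeal_iff {q : V} {L : Set V} (f : MvPolynomial G.edgeSet K) :
    f ∈ graphPathIdeal K G q L ↔ ∀ m ∈ f.support,
      ∃ l ∈ L, ∃ w : G.Walk q l, w.IsPath ∧ ↑(walkEdgeFinset w) ⊆ (↑m.support : Set G.edgeSet) := by
  have hgen : {m | ∃ l ∈ L, ∃ w : G.Walk q l, w.IsPath ∧ m = walkMonomial K w} =
      (fun d => monomial d 1) '' {d | ∃ l ∈ L, ∃ w : G.Walk q l, w.IsPath ∧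
        d = ∑ e ∈ walkEdgeFinset w, Finsupp.single e 1} := by
    ext m
    simp only [Set.mem_ofPred_eq, Set.mem_image, walkMonomial_eq_prod_X,
      prod_X_eq_monomial_sum_single]
    constructor
    · rintro ⟨l, hl, w, hw, rfl⟩
      exact ⟨_, ⟨l, hl, w, hw, rfl⟩, rfl⟩
    · rintro ⟨_, ⟨l, hl, w, hw, rfl⟩, rfl⟩
      exact ⟨l, hl, w, hw, rfl⟩
  rw [graphPathIdeal, hgen, mem_ideal_span_monomial_image]
  refine forall₂_congr fun m _ => ⟨?_, ?_⟩
  · rintro ⟨_, ⟨l, hl, w, hw, rfl⟩, hle⟩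
    exact ⟨l, hl, w, hw, Finset.coe_subset.mpr
      ((Finsupp.sum_single_one_le_iff_subset_support _ m).mp hle)⟩
  · rintro ⟨l, hl, w, hw, hsub⟩
    exact ⟨_, ⟨l, hl, w, hw, rfl⟩,
      (Finsupp.sum_single_one_le_iff_subset_support _ m).mpr (Finset.coe_subset.mp hsub)⟩

end Algebra

theorem graphPathIdeal_eq_iInf_minimalCuts_general (K : Type) [Field K] {V : Type}
    [Fintype V] [DecidableEq V] (G : SimpleGraph V)
    (q : V) (L : Set V) :
    graphPathIdeal K G q L =
      ⨅ (C : Set G.edgeSet) (_ : IsMinimalCut G q L C),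
        Ideal.span ((X : G.edgeSet → MvPolynomial G.edgeSet K) '' C) := by
  ext f
  rw [mem_graphPathIdeal_iff, mem_iInf_span_X_image_iff]
  exact forall₂_congr fun m _ => exists_isPath_subset_iff_forall_isMinimalCut _

/-- The path ideal of `G` (source `q`, targets `L`) equals the intersection, over
all minimal cuts `C` separating `q` from all of `L`, of the monomial prime ideals
generated by the variables of the edges of `C`; in particular (by the definition of
the Alexander dual of the squarefree cut ideal generated by the minimal-cut
monomials) the path ideal is the Alexander dual of the cut ideal. -/
theorem graphPathIdeal_eq_iInf_minimalCuts (K : Type) [Field K] {V : Type}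
    [Fintype V] [DecidableEq V] (G : SimpleGraph V) (hG : G.Connected)
    (q : V) (L : Set V) (hL : L.Nonempty) (hq : q ∉ L) :
    graphPathIdeal K G q L =
      ⨅ (C : Set G.edgeSet) (_ : IsMinimalCut G q L C),
        Ideal.span ((X : G.edgeSet → MvPolynomial G.edgeSet K) '' C) :=
  graphPathIdeal_eq_iInf_minimalCuts_general K G q L
end
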